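/- (Mixed summation formula) Let α > 0, β ∈ ℝ, k ∈ ℕ, and p ≤ k. Then for all z ∈ ℂ, d^k/dz^k E_{α,β}(z) = (1/α^{k-p}) Σ_{j=0}^{k-p} c_j^{(k-p)} · d^p/dz^p E_{α, (k-p)α + β - j}(z), where c_j^{(m)} are the Djrbashian coefficients defined recursively by c_0^{(0)} = 1, c_0^{(m)} = (1-β-α(m-1)) c_0^{(m-1)}, c_j^{(m)} = c_{j-1}^{(m-1)} + (1-β-α(m-1)+j) c_j^{(m-1)} for 1 ≤ j ≤ m-1, c_m^{(m)} = 1. -/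

import Mathlib

open MeasureTheory Set
open scoped ContDiff

/-- The Mittag-Leffler function `E_{α,β}(z) = ∑_{j=0}^∞ z^j / Γ(αj+β)`. -/
noncomputable def mittagLeffler (α β : ℝ) (z : ℂ) : ℂ :=
  ∑' j : ℕ, z ^ j / Complex.Gamma ((α * j + β : ℝ) : ℂ)

/-- The Djrbashian coefficients `c_j^{(k)}`, defined recursively by `c_0^{(0)} = 1`,
`c_0^{(k)} = (1-β-α(k-1)) c_0^{(k-1)}`,
`c_j^{(k)} = c_{j-1}^{(k-1)} + (1-β-α(k-1)+j) c_j^{(k-1)}` for `1 ≤ j ≤ k-1`,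
and `c_k^{(k)} = 1`. -/
noncomputable def djcoef (α β : ℝ) : ℕ → ℕ → ℝ
  | 0, j => if j = 0 then 1 else 0
  | (k + 1), j =>
    if j = 0 then (1 - β - α * k) * djcoef α β k 0
    else if j = k + 1 then 1
    else djcoef α β k (j - 1) + (1 - β - α * k + j) * djcoef α β k j

lemma one_div_Gamma_eq (s : ℂ) : 1 / Complex.Gamma s = s / Complex.Gamma (s + 1) := by
  rcases eq_or_ne s 0 with rfl | hs
  · simp
  · rw [Complex.Gamma_add_one s hs]
    rcases eq_or_ne (Complex.Gamma s) 0 with h | h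
    · simp [h]
    · field_simp

lemma Gamma_lower (M x : ℝ) (hM : 1 ≤ M) (hx : 1 ≤ x) :
    M ^ (x - 1) * Real.exp (-(M + 1)) ≤ Real.Gamma x := by
  rw [Real.Gamma_eq_integral (by linarith)]
  have hint : IntegrableOn (fun t : ℝ => Real.exp (-t) * t ^ (x - 1)) (Ioi 0) :=
    Real.GammaIntegral_convergent (by linarith)
  have h1 : (∫ t in Ioc M (M + 1), Real.exp (-t) * t ^ (x - 1)) ≤
      ∫ t in Ioi (0:ℝ), Real.exp (-t) * t ^ (x - 1) := by
    apply setIntegral_mono_set hint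
    · filter_upwards [ae_restrict_mem measurableSet_Ioi] with t ht
      exact mul_nonneg (Real.exp_pos _).le (Real.rpow_nonneg (le_of_lt ht) _)
    · refine Filter.Eventually.of_forall fun t ht => ?_
      exact lt_of_lt_of_le (by linarith) ht.1.le
  refine le_trans ?_ h1
  have h2 : M ^ (x - 1) * Real.exp (-(M + 1)) * (volume (Ioc M (M + 1))).toReal ≤
      ∫ t in Ioc M (M + 1), Real.exp (-t) * t ^ (x - 1) := by
    apply setIntegral_ge_of_const_le_real measurableSet_Ioc (by simp)
    · intro t ht
      have h3 : Real.exp (-(M+1)) ≤ Real.exp (-t) := Real.exp_le_exp.2 (by linarith [ht.2])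
      have h4 : M ^ (x-1) ≤ t ^ (x-1) :=
        Real.rpow_le_rpow (by linarith) ht.1.le (by linarith)
      calc M ^ (x - 1) * Real.exp (-(M + 1)) ≤ t ^ (x-1) * Real.exp (-t) := by
            apply mul_le_mul h4 h3 (Real.exp_pos _).le
            exact Real.rpow_nonneg (by linarith [ht.1]) _
        _ = Real.exp (-t) * t ^ (x-1) := by ring
    · exact hint.mono_set (Ioc_subset_Ioi_self.trans (Ioi_subset_Ioi (by linarith)))
  simpa using h2

lemma summable_ml_norm (α β : ℝ) (hα : 0 < α) (r : ℝ) (hr : 0 ≤ r) :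
    Summable (fun n : ℕ => r ^ n * ‖1 / Complex.Gamma ((α * n + β : ℝ) : ℂ)‖) := by
  set M : ℝ := (2 * (r + 1)) ^ α⁻¹ with hMdef
  have hM1 : (1:ℝ) ≤ M := by
    rw [hMdef]
    have h := Real.rpow_le_rpow (x := 1) (by norm_num) (by linarith : (1:ℝ) ≤ 2 * (r + 1))
      (by positivity : (0:ℝ) ≤ α⁻¹)
    simpa using h
  have hMpos : (0:ℝ) < M := by linarith
  have hMα : M ^ α = 2 * (r + 1) := by
    rw [hMdef, ← Real.rpow_mul (by linarith), inv_mul_cancel₀ hα.ne', Real.rpow_one]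
  obtain ⟨N, hN⟩ := exists_nat_ge ((1 - β) / α)
  set C : ℝ := Real.exp (M + 1) * M ^ (1 - β) with hCdef
  have hC : 0 ≤ C := by positivity
  apply Summable.of_norm_bounded_eventually_nat (g := fun n => C * (1/2 : ℝ) ^ n)
  · exact (summable_geometric_of_lt_one (by norm_num) (by norm_num)).mul_left C
  · filter_upwards [Filter.eventually_ge_atTop N] with n hn
    set x : ℝ := α * n + β with hxdef
    have hx1 : 1 ≤ x := by
      have : (1 - β) / α ≤ (n : ℝ) := hN.trans (by exact_mod_cast hn)
      have := (div_le_iff₀ hα).mp this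
      rw [hxdef]; linarith
    have hgpos : 0 < Real.Gamma x := Real.Gamma_pos_of_pos (by linarith)
    have hnorm : ‖(1:ℂ) / Complex.Gamma ((x : ℝ) : ℂ)‖ = 1 / Real.Gamma x := by
      rw [Complex.Gamma_ofReal, norm_div, norm_one, Complex.norm_real,
        Real.norm_eq_abs, abs_of_pos hgpos]
    have hterm0 : 0 ≤ r ^ n * ‖(1:ℂ) / Complex.Gamma ((x : ℝ) : ℂ)‖ := by positivity
    rw [Real.norm_eq_abs, abs_of_nonneg hterm0, hnorm]
    have hg := Gamma_lower M x hM1 hx1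
    have hMx : (0:ℝ) < M ^ (x - 1) * Real.exp (-(M + 1)) := by positivity
    have h5 : 1 / Real.Gamma x ≤ 1 / (M ^ (x - 1) * Real.exp (-(M + 1))) :=
      one_div_le_one_div_of_le hMx hg
    have e1 : M ^ (x - 1) = (2 * (r + 1)) ^ n * M ^ (β - 1) := by
      rw [show x - 1 = α * n + (β - 1) by rw [hxdef]; ring, Real.rpow_add hMpos, ← hMα,
        ← Real.rpow_natCast (M ^ α) n, ← Real.rpow_mul (le_of_lt hMpos), mul_comm (α : ℝ)]
    rw [e1] at h5
    calc
      r ^ n * (1 / Real.Gamma x) ≤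
          r ^ n * (1 / ((2 * (r + 1)) ^ n * M ^ (β - 1) * Real.exp (-(M + 1)))) :=
        mul_le_mul_of_nonneg_left h5 (pow_nonneg hr n)
      _ = C * (r / (2 * (r + 1))) ^ n := by
        rw [hCdef, div_pow, show (1:ℝ) - β = -(β - 1) by ring, Real.rpow_neg hMpos.le,
          show M + 1 = -(-(M + 1)) by ring, Real.exp_neg]
        have h6 : ((2:ℝ) * (r + 1)) ^ n ≠ 0 := by positivity
        have h7 : M ^ (β - 1) ≠ 0 := by positivity
        have h8 : Real.exp (-(M + 1)) ≠ 0 := by positivity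
        field_simp
      _ ≤ C * (1/2 : ℝ) ^ n := by
        apply mul_le_mul_of_nonneg_left _ hC
        apply pow_le_pow_left₀ (by positivity)
        rw [div_le_div_iff₀ (by linarith) (by norm_num)]
        linarith

lemma summable_ml (α β : ℝ) (hα : 0 < α) (z : ℂ) :
    Summable (fun n : ℕ => z ^ n / Complex.Gamma ((α * n + β : ℝ) : ℂ)) := by
  refine Summable.of_norm ((summable_ml_norm α β hα ‖z‖ (norm_nonneg z)).congr fun n => ?_)
  simp [norm_div, norm_pow, mul_one_div, div_eq_mul_inv]

lemma hasDerivAt_ml (α β : ℝ) (hα : 0 < α) (z : ℂ) :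
    HasDerivAt (mittagLeffler α β)
      ((1 / (α : ℂ)) * (mittagLeffler α (α + β - 1) z +
        (1 - (β : ℂ)) * mittagLeffler α (α + β) z)) z := by
  set R : ℝ := ‖z‖ + 1 with hRdef
  have hR1 : (1:ℝ) ≤ R := by rw [hRdef]; have := norm_nonneg z; linarith
  have hR0 : (0:ℝ) ≤ R := by linarith
  set c : ℕ → ℂ := fun n => Complex.Gamma ((α * n + β : ℝ) : ℂ) with hcdef
  set g : ℕ → ℂ → ℂ := fun n w => w ^ n / c n with hgdef
  set g' : ℕ → ℂ → ℂ := fun n w => ((n : ℂ) * w ^ (n - 1)) / c n with hg'def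
  set u : ℕ → ℝ := fun n => ((n : ℝ) * R ^ (n - 1)) * ‖1 / c n‖ with hudef
  have hunn : ∀ n, 0 ≤ u n := fun n => by
    apply mul_nonneg _ (norm_nonneg _); positivity
  have hu : Summable u := by
    refine Summable.of_nonneg_of_le hunn (fun n => ?_)
      (summable_ml_norm α β hα (2 * R) (by linarith))
    apply mul_le_mul_of_nonneg_right _ (norm_nonneg _)
    calc (n : ℝ) * R ^ (n - 1) ≤ (2:ℝ) ^ n * R ^ n := by
          apply mul_le_mul _ (pow_le_pow_right₀ hR1 (Nat.sub_le n 1)) (by positivity)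
            (by positivity)
          exact_mod_cast (Nat.lt_two_pow_self (n := n)).le
      _ = (2 * R) ^ n := by rw [mul_pow]
  have hgderiv : ∀ n y, HasDerivAt (g n) (g' n y) y := fun n y =>
    (hasDerivAt_pow n y).div_const (c n)
  have hgbound : ∀ n y, y ∈ Metric.ball (0:ℂ) R → ‖g' n y‖ ≤ u n := by
    intro n y hy
    rw [mem_ball_zero_iff] at hy
    rw [hg'def, hudef]
    simp only [norm_div, norm_mul, norm_pow, Complex.norm_natCast, norm_one, one_div, norm_inv]
    rw [div_eq_mul_inv]
    refine mul_le_mul_of_nonneg_right ?_ (inv_nonneg.mpr (norm_nonneg (c n)))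
    exact mul_le_mul_of_nonneg_left (pow_le_pow_left₀ (norm_nonneg y) hy.le _)
      (Nat.cast_nonneg n)
  have hzball : z ∈ Metric.ball (0:ℂ) R := by
    rw [mem_ball_zero_iff]; rw [hRdef]; linarith
  have key : HasDerivAt (fun w => ∑' n, g n w) (∑' n, g' n z) z :=
    hasDerivAt_tsum_of_isPreconnected hu Metric.isOpen_ball
      ((convex_ball (0:ℂ) R).isPreconnected) (fun n y _ => hgderiv n y) hgbound hzball
      (summable_ml α β hα z) hzball
  have hML : mittagLeffler α β = fun w => ∑' n, g n w := rfl
  rw [hML]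
  convert key using 1
  have hsum' : Summable (fun n => g' n z) :=
    Summable.of_norm (hu.of_nonneg_of_le (fun n => norm_nonneg _) fun n => hgbound n z hzball)
  rw [Summable.tsum_eq_zero_add hsum']
  have h0 : g' 0 z = 0 := by simp [hg'def]
  rw [h0, zero_add]
  have hterm : ∀ n : ℕ,
      (1 / (α : ℂ)) * (z ^ n / Complex.Gamma ((α * n + (α + β - 1) : ℝ) : ℂ) +
        (1 - (β : ℂ)) * (z ^ n / Complex.Gamma ((α * n + (α + β) : ℝ) : ℂ))) = g' (n + 1) z := by
    intro n
    have harg : (α * ((n + 1 : ℕ) : ℝ) + β) = α * n + α + β := by push_cast; ring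
    have hc1 : c (n + 1) = Complex.Gamma ((α * n + α + β : ℝ) : ℂ) := by
      simp only [hcdef]; rw [harg]
    have h2 : ((α * n + (α + β) : ℝ) : ℂ) = ((α * n + α + β : ℝ) : ℂ) := by norm_cast; ring
    have h1 : ((α * n + (α + β - 1) : ℝ) : ℂ) + 1 = ((α * n + α + β : ℝ) : ℂ) := by
      push_cast; ring
    have hco := one_div_Gamma_eq ((α * n + (α + β - 1) : ℝ) : ℂ)
    rw [h1] at hco
    have hcast : (((n + 1 : ℕ) : ℂ)) = (n : ℂ) + 1 := by push_cast; ring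
    rw [hg'def]
    simp only [Nat.add_sub_cancel]
    rw [hc1, hcast, h2]
    rw [div_eq_mul_one_div (z ^ n) (Complex.Gamma ((α * n + (α + β - 1) : ℝ) : ℂ)), hco,
      show ((α * n + (α + β - 1) : ℝ) : ℂ) = (α : ℂ) * ((n : ℂ) + 1) - (1 - (β : ℂ)) by
        push_cast; ring]
    have hαne : (α : ℂ) ≠ 0 := Complex.ofReal_ne_zero.mpr hα.ne'
    generalize Complex.Gamma ((α * n + α + β : ℝ) : ℂ) = G
    rcases eq_or_ne G 0 with hB | hB
    · subst hB; simp
    · field_simp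
      ring
  calc (1 / (α : ℂ)) * (mittagLeffler α (α + β - 1) z + (1 - (β : ℂ)) *
        mittagLeffler α (α + β) z)
      = ∑' n : ℕ, (1 / (α : ℂ)) * (z ^ n / Complex.Gamma ((α * n + (α + β - 1) : ℝ) : ℂ) +
          (1 - (β : ℂ)) * (z ^ n / Complex.Gamma ((α * n + (α + β) : ℝ) : ℂ))) := by
        rw [tsum_mul_left, Summable.tsum_add (summable_ml α (α + β - 1) hα z)
          ((summable_ml α (α + β) hα z).mul_left _), tsum_mul_left]
        rfl
    _ = ∑' n : ℕ, g' (n + 1) z := tsum_congr hterm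

lemma djcoef_self (α β : ℝ) : ∀ m, djcoef α β m m = 1
  | 0 => by simp [djcoef]
  | (m + 1) => by simp [djcoef]

lemma djcoef_gt (α β : ℝ) : ∀ m j, m < j → djcoef α β m j = 0 := by
  intro m
  induction m with
  | zero => intro j hj; simp only [djcoef]; rw [if_neg (by omega)]
  | succ k ih =>
    intro j hj
    have h0 : j ≠ 0 := by omega
    have h1 : j ≠ k + 1 := by omega
    simp only [djcoef, h0, h1, if_false, ite_false]
    rw [ih (j - 1) (by omega), ih j (by omega)]
    ring

lemma djcoef_zero (α β : ℝ) (m : ℕ) :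
    djcoef α β (m + 1) 0 = (1 - β - α * m) * djcoef α β m 0 := by
  simp [djcoef]

lemma djcoef_succ_succ (α β : ℝ) (m j : ℕ) (hj : j ≤ m) :
    djcoef α β (m + 1) (j + 1) =
      djcoef α β m j + (1 - β - α * m + ((j + 1 : ℕ) : ℝ)) * djcoef α β m (j + 1) := by
  rcases eq_or_ne j m with rfl | h
  · rw [djcoef_self, djcoef_gt α β j (j + 1) (by omega), djcoef_self]
    ring
  · have h1 : j + 1 ≠ m + 1 := by omega
    simp only [djcoef, h1, Nat.add_sub_cancel, if_false, ite_false]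
    simp

lemma differentiable_ml (α β : ℝ) (hα : 0 < α) : Differentiable ℂ (mittagLeffler α β) :=
  fun z => (hasDerivAt_ml α β hα z).differentiableAt

lemma contDiff_ml (α β : ℝ) (hα : 0 < α) : ContDiff ℂ ∞ (mittagLeffler α β) :=
  (differentiable_ml α β hα).contDiff

lemma deriv_ml (α β : ℝ) (hα : 0 < α) :
    deriv (mittagLeffler α β) = fun z =>
      (1 / (α : ℂ)) * (mittagLeffler α (α + β - 1) z +
        (1 - (β : ℂ)) * mittagLeffler α (α + β) z) :=
  funext fun z => (hasDerivAt_ml α β hα z).deriv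

lemma contDiff_iteratedDeriv {f : ℂ → ℂ} (hf : ContDiff ℂ ∞ f) (p : ℕ) :
    ContDiff ℂ ∞ (iteratedDeriv p f) := by
  rw [iteratedDeriv_eq_iterate]
  exact hf.iterate_deriv p

lemma iteratedDeriv_comb (p : ℕ) {f g : ℂ → ℂ} (hf : ContDiff ℂ ∞ f) (hg : ContDiff ℂ ∞ g)
    (a b : ℂ) :
    iteratedDeriv p (fun w => a * (f w + b * g w)) =
      fun w => a * (iteratedDeriv p f w + b * iteratedDeriv p g w) := by
  induction p generalizing f g with
  | zero => simp [iteratedDeriv_zero]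
  | succ q ih =>
    have hf' : ContDiff ℂ ∞ (deriv f) := (contDiff_infty_iff_deriv.mp hf).2
    have hg' : ContDiff ℂ ∞ (deriv g) := (contDiff_infty_iff_deriv.mp hg).2
    have hd : deriv (fun w => a * (f w + b * g w)) = fun w => a * (deriv f w + b * deriv g w) := by
      funext w
      rw [deriv_const_mul (d := fun w => f w + b * g w) _ ((((contDiff_infty_iff_deriv.mp hf).1 w).add
        (((contDiff_infty_iff_deriv.mp hg).1 w).const_mul b))),
        deriv_fun_add ((contDiff_infty_iff_deriv.mp hf).1 w) (((contDiff_infty_iff_deriv.mp hg).1 w).const_mul b),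
        deriv_const_mul _ ((contDiff_infty_iff_deriv.mp hg).1 w)]
    rw [iteratedDeriv_succ', hd, ih hf' hg']
    funext w
    rw [iteratedDeriv_succ', iteratedDeriv_succ']

lemma aux_ml (α : ℝ) (hα : 0 < α) (p : ℕ) : ∀ (m : ℕ) (β : ℝ) (z : ℂ),
    iteratedDeriv (m + p) (mittagLeffler α β) z =
      (1 / (α : ℂ) ^ m) * ∑ j ∈ Finset.range (m + 1), (djcoef α β m j : ℂ) *
        iteratedDeriv p (mittagLeffler α ((m : ℝ) * α + β - (j : ℕ))) z := by
  intro m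
  induction m with
  | zero =>
    intro β z
    norm_num [djcoef]
  | succ m ih =>
    intro β z
    have hdML : ∀ b : ℝ, Differentiable ℂ (iteratedDeriv p (mittagLeffler α b)) :=
      fun b => (contDiff_infty_iff_deriv.mp
        (contDiff_iteratedDeriv (contDiff_ml α b hα) p)).1
    -- one-step formula for the (p+1)-st derivative
    have hone : ∀ (b : ℝ) (w : ℂ), deriv (iteratedDeriv p (mittagLeffler α b)) w =
        (1 / (α : ℂ)) * (iteratedDeriv p (mittagLeffler α (α + b - 1)) w +
          (1 - (b : ℂ)) * iteratedDeriv p (mittagLeffler α (α + b)) w) := by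
      intro b w
      rw [← iteratedDeriv_succ, iteratedDeriv_succ', deriv_ml α b hα,
        iteratedDeriv_comb p (contDiff_ml α (α + b - 1) hα) (contDiff_ml α (α + b) hα)]
    have hstep : m + 1 + p = (m + p) + 1 := by omega
    rw [hstep, iteratedDeriv_succ]
    have hfun : iteratedDeriv (m + p) (mittagLeffler α β) =
        fun w => (1 / (α : ℂ) ^ m) * ∑ j ∈ Finset.range (m + 1), (djcoef α β m j : ℂ) *
          iteratedDeriv p (mittagLeffler α ((m : ℝ) * α + β - (j : ℕ))) w :=
      funext (ih β)
    rw [hfun]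
    rw [deriv_const_mul _ (DifferentiableAt.fun_sum fun j _ =>
      ((hdML _ z).const_mul _ : DifferentiableAt ℂ _ z))]
    rw [deriv_fun_sum fun j _ => ((hdML _ z).const_mul _ : DifferentiableAt ℂ _ z)]
    have hterm : ∀ j ∈ Finset.range (m + 1),
        deriv (fun w => (djcoef α β m j : ℂ) *
          iteratedDeriv p (mittagLeffler α ((m : ℝ) * α + β - (j : ℕ))) w) z =
        (djcoef α β m j : ℂ) * ((1 / (α : ℂ)) *
          (iteratedDeriv p (mittagLeffler α (((m + 1 : ℕ) : ℝ) * α + β - ((j + 1 : ℕ) : ℝ))) z +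
            (1 - (((m : ℝ) * α + β - (j : ℕ) : ℝ) : ℂ)) *
              iteratedDeriv p (mittagLeffler α (((m + 1 : ℕ) : ℝ) * α + β - ((j : ℕ) : ℝ))) z)) := by
      intro j _
      rw [deriv_const_mul _ (hdML _ z)]
      rw [hone ((m : ℝ) * α + β - (j : ℕ)) z]
      rw [show α + ((m : ℝ) * α + β - (j : ℕ)) - 1 =
        ((m + 1 : ℕ) : ℝ) * α + β - ((j + 1 : ℕ) : ℝ) by push_cast; ring]
      rw [show α + ((m : ℝ) * α + β - (j : ℕ)) =
        ((m + 1 : ℕ) : ℝ) * α + β - ((j : ℕ) : ℝ) by push_cast; ring]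
    rw [Finset.sum_congr rfl hterm]
    -- now pure summation algebra
    set T : ℕ → ℂ := fun i =>
      iteratedDeriv p (mittagLeffler α (((m + 1 : ℕ) : ℝ) * α + β - ((i : ℕ) : ℝ))) z with hT
    have key : ∑ j ∈ Finset.range (m + 1), (djcoef α β m j : ℂ) *
          (T (j + 1) + (1 - (((m : ℝ) * α + β - (j : ℕ) : ℝ) : ℂ)) * T j) =
        ∑ i ∈ Finset.range (m + 1 + 1), (djcoef α β (m + 1) i : ℂ) * T i := by
      have e1 : ∀ j ∈ Finset.range (m + 1), (djcoef α β (m + 1) (j + 1) : ℂ) * T (j + 1) =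
          (djcoef α β m j : ℂ) * T (j + 1) +
            (((1 - β - α * m + ((j + 1 : ℕ) : ℝ)) * djcoef α β m (j + 1) : ℝ) : ℂ) * T (j + 1) := by
        intro j hj
        rw [djcoef_succ_succ α β m j (Nat.lt_succ_iff.mp (Finset.mem_range.mp hj))]
        push_cast
        ring
      have e2 : ∀ j ∈ Finset.range (m + 1), (djcoef α β m j : ℂ) *
          (T (j + 1) + (1 - (((m : ℝ) * α + β - (j : ℕ) : ℝ) : ℂ)) * T j) =
          (djcoef α β m j : ℂ) * T (j + 1) +
            ((djcoef α β m j : ℂ) * (1 - (((m : ℝ) * α + β - (j : ℕ) : ℝ) : ℂ))) * T j :=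
        fun j _ => by ring
      have e3 : ∑ j ∈ Finset.range m,
            ((djcoef α β m (j + 1) : ℂ) * (1 - (((m : ℝ) * α + β - ((j + 1 : ℕ)) : ℝ) : ℂ))) *
              T (j + 1) =
          ∑ j ∈ Finset.range m,
            (((1 - β - α * m + ((j + 1 : ℕ) : ℝ)) * djcoef α β m (j + 1) : ℝ) : ℂ) *
              T (j + 1) := by
        refine Finset.sum_congr rfl fun j _ => ?_
        push_cast
        ring
      have e4 : ((djcoef α β m 0 : ℂ) *
            (1 - (((m : ℝ) * α + β - ((0 : ℕ)) : ℝ) : ℂ))) * T 0 =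
          (djcoef α β (m + 1) 0 : ℂ) * T 0 := by
        rw [djcoef_zero]
        push_cast
        ring
      rw [Finset.sum_range_succ' (fun i => (djcoef α β (m + 1) i : ℂ) * T i) (m + 1),
        Finset.sum_congr rfl e1, Finset.sum_add_distrib,
        Finset.sum_range_succ (fun j =>
          (((1 - β - α * m + ((j + 1 : ℕ) : ℝ)) * djcoef α β m (j + 1) : ℝ) : ℂ) * T (j + 1)) m,
        djcoef_gt α β m (m + 1) (by omega),
        Finset.sum_congr rfl e2, Finset.sum_add_distrib,
        Finset.sum_range_succ' (fun j => ((djcoef α β m j : ℂ) *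
          (1 - (((m : ℝ) * α + β - (j : ℕ) : ℝ) : ℂ))) * T j) m,
        e3, e4]
      push_cast
      ring
    have hαne : (α : ℂ) ≠ 0 := Complex.ofReal_ne_zero.mpr hα.ne'
    rw [← key, Finset.mul_sum, Finset.mul_sum]
    have hsc : ∀ c X : ℂ, 1 / (α : ℂ) ^ m * (c * (1 / (α : ℂ) * X)) =
        1 / ((α : ℂ) ^ m * (α : ℂ)) * (c * X) := by
      intro c X
      field_simp
    refine Finset.sum_congr rfl fun j _ => ?_
    rw [pow_succ]
    exact hsc _ _

/-- Mixed summation formula: for `p ≤ k`,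
`d^k/dz^k E_{α,β}(z) = (1/α^{k-p}) ∑_{j=0}^{k-p} c_j^{(k-p)} d^p/dz^p E_{α,(k-p)α+β-j}(z)`. -/
theorem iteratedDeriv_mittagLeffler_mixedSF (α β : ℝ) (hα : 0 < α) (k p : ℕ) (hp : p ≤ k)
    (z : ℂ) :
    iteratedDeriv k (mittagLeffler α β) z =
      (1 / (α : ℂ) ^ (k - p)) *
        ∑ j ∈ Finset.range (k - p + 1), (djcoef α β (k - p) j : ℂ) *
          iteratedDeriv p (mittagLeffler α ((k - p) * α + β - j)) z := by
  obtain ⟨m, rfl⟩ : ∃ m, k = m + p := ⟨k - p, (Nat.sub_add_cancel hp).symm⟩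
  simp only [Nat.add_sub_cancel]
  have hc : ((m + p : ℕ) : ℝ) - (p : ℝ) = (m : ℝ) := by push_cast; ring
  simp only [hc]
  exact aux_ml α hα p m β z
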